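/- arXiv:2408.00543 — 4 statements merged into one kernel-verified Lean document; each statement's English description precedes it below -/
import Mathlib

section
/- For every x ∈ ℝⁿ one has θ_SD(x) ≤ 0, and the following statements are equivalent: (i) x is not Pareto critical; (ii) d_SD(x) ≠ 0; (iii) θ_SD(x) < 0. -/
/-!
The objective `d ↦ maxD f x d + ‖d‖ ^ 2 / 2` vanishes at `d = 0`, so its minimum `θ` is `≤ 0`.
If some `d` has `maxD f x d < 0`, then `maxD` is positively homogeneous while the quadratic term is
of second order, so a suitable multiple of `d` gives a negative value: `θ < 0`, and hence
`d_SD ≠ 0`. If `x` is Pareto critical, `maxD f x d_SD ≥ 0`, so `θ ≤ 0` forces `d_SD = 0` and `θ = 0`.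
-/

open RealInnerProductSpace

noncomputable section

abbrev E (n : ℕ) := EuclideanSpace ℝ (Fin n)

def maxD {n m : ℕ} [NeZero m] (f : Fin m → E n → ℝ) (x d : E n) : ℝ :=
  Finset.univ.sup' Finset.univ_nonempty (fun i => ⟪gradient (f i) x, d⟫)

def ParetoCritical {n m : ℕ} (f : Fin m → E n → ℝ) (x : E n) : Prop :=
  ∀ d : E n, ∃ i, 0 ≤ ⟪gradient (f i) x, d⟫

section SteepestDescent

variable {n m : ℕ} [NeZero m] (f : Fin m → E n → ℝ) (x : E n)

theorem le_maxD (i : Fin m) (d : E n) : ⟪gradient (f i) x, d⟫ ≤ maxD f x d :=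
  Finset.le_sup' (fun j => ⟪gradient (f j) x, d⟫) (Finset.mem_univ i)

theorem maxD_zero : maxD f x 0 = 0 := by
  simp [maxD]

theorem maxD_lt_zero_iff (d : E n) : maxD f x d < 0 ↔ ∀ i, ⟪gradient (f i) x, d⟫ < 0 := by
  simp [maxD, Finset.sup'_lt_iff]

theorem maxD_smul {t : ℝ} (ht : 0 ≤ t) (d : E n) : maxD f x (t • d) = t * maxD f x d := by
  simp only [maxD, real_inner_smul_right]
  exact (Finset.apply_sup'_eq_sup'_comp _ (t * ·)
    fun _ _ => (monotone_mul_left_of_nonneg ht).map_max).symm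

theorem not_paretoCritical_iff : ¬ ParetoCritical f x ↔ ∃ d, maxD f x d < 0 := by
  simp [ParetoCritical, maxD_lt_zero_iff]

variable {f x}

theorem ParetoCritical.maxD_nonneg (hc : ParetoCritical f x) (d : E n) : 0 ≤ maxD f x d :=
  let ⟨i, hi⟩ := hc d
  hi.trans (le_maxD f x i d)

/-- The witness is the optimal step `t • d` along `d`, `t = -maxD f x d / ‖d‖ ^ 2`. -/
theorem exists_maxD_add_sq_norm_lt_zero {d : E n} (hd : maxD f x d < 0) :
    ∃ d' : E n, maxD f x d' + ‖d'‖ ^ 2 / 2 < 0 := by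
  set M := maxD f x d
  have hd0 : d ≠ 0 := by
    rintro rfl
    exact hd.ne (maxD_zero f x)
  have hN : 0 < ‖d‖ ^ 2 := by positivity
  set t := -M / ‖d‖ ^ 2
  have ht : 0 ≤ t := div_nonneg (by linarith) hN.le
  refine ⟨t • d, ?_⟩
  have hvalue : t * M + ‖t • d‖ ^ 2 / 2 = -(M ^ 2 / (2 * ‖d‖ ^ 2)) := by
    rw [norm_smul, Real.norm_eq_abs, mul_pow, sq_abs]
    simp only [t]
    field_simp
    ring
  have hpos : 0 < M ^ 2 / (2 * ‖d‖ ^ 2) := div_pos (by nlinarith) (by positivity)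
  rw [maxD_smul f x ht]
  linarith

end SteepestDescent

theorem stmt1_general {n m : ℕ} [NeZero m] (f : Fin m → E n → ℝ)
    (x dsd : E n) (θ : ℝ)
    (hmin : ∀ d : E n, maxD f x dsd + ‖dsd‖ ^ 2 / 2 ≤ maxD f x d + ‖d‖ ^ 2 / 2)
    (hθ : θ = maxD f x dsd + ‖dsd‖ ^ 2 / 2) :
    θ ≤ 0 ∧ (¬ ParetoCritical f x ↔ dsd ≠ 0) ∧ (¬ ParetoCritical f x ↔ θ < 0) := by
  have hθ_nonpos : θ ≤ 0 := by simpa [hθ, maxD_zero] using hmin 0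
  have hcrit (hc : ParetoCritical f x) : 0 ≤ θ ∧ dsd = 0 := by
    have hmax := hc.maxD_nonneg dsd
    have hnorm : ‖dsd‖ ^ 2 = 0 := le_antisymm (by linarith) (by positivity)
    exact ⟨by rw [hθ]; positivity, by simpa using hnorm⟩
  have hnoncrit (hnc : ¬ ParetoCritical f x) : θ < 0 := by
    obtain ⟨d, hd⟩ := (not_paretoCritical_iff f x).mp hnc
    obtain ⟨d', hd'⟩ := exists_maxD_add_sq_norm_lt_zero hd
    exact hθ ▸ (hmin d').trans_lt hd'
  refine ⟨hθ_nonpos, ⟨fun hnc hdsd => ?_, fun hdsd hc => hdsd (hcrit hc).2⟩,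
    ⟨hnoncrit, fun hneg hc => (hcrit hc).1.not_gt hneg⟩⟩
  simpa [hθ, hdsd, maxD_zero] using hnoncrit hnc

/-- θ_SD(x) ≤ 0 and equivalence of non-criticality, d_SD(x) ≠ 0, θ_SD(x) < 0. -/
theorem stmt1 {n m : ℕ} [NeZero m] (f : Fin m → E n → ℝ)
    (hf : ∀ i, ContDiff ℝ 1 (f i)) (x dsd : E n) (θ : ℝ)
    (hmin : ∀ d : E n, maxD f x dsd + ‖dsd‖ ^ 2 / 2 ≤ maxD f x d + ‖d‖ ^ 2 / 2)
    (hθ : θ = maxD f x dsd + ‖dsd‖ ^ 2 / 2) :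
    θ ≤ 0 ∧ (¬ ParetoCritical f x ↔ dsd ≠ 0) ∧ (¬ ParetoCritical f x ↔ θ < 0) :=
  stmt1_general f x dsd θ hmin hθ
end
end

section
/- The maps x ↦ d_SD(x) and x ↦ θ_SD(x) are continuous on ℝⁿ. -/
/-!
The objective `d ↦ max_i ⟪g_i, d⟫ + ‖d‖² / 2` is the sum of a convex function and `‖d‖² / 2`, so it
grows at least like `‖d - d*‖² / 4` away from its minimiser `d*`. Perturbing the vectors `g_i` by
`δ` changes the objective by at most `δ ‖d‖`; comparing the two growth inequalities at the two
minimisers gives `‖d* - d*'‖² ≤ 2 δ (‖d*‖ + ‖d*'‖)`, while `‖d*‖ ≤ 2 ‖g_i‖`. Hence the minimiser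
depends continuously on the gradients, which depend continuously on `x`.
-/

open RealInnerProductSpace

noncomputable section

open Finset

section MaxInner

variable {ι F : Type*} [Fintype ι] [Nonempty ι] [NormedAddCommGroup F] [InnerProductSpace ℝ F]

def maxInner (v : ι → F) (d : F) : ℝ :=
  univ.sup' univ_nonempty fun i => ⟪v i, d⟫

def descentModel (v : ι → F) (d : F) : ℝ :=
  maxInner v d + ‖d‖ ^ 2 / 2

theorem inner_le_maxInner (v : ι → F) (i : ι) (d : F) : ⟪v i, d⟫ ≤ maxInner v d :=
  le_sup' (fun i => ⟪v i, d⟫) (mem_univ i)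

theorem maxInner_zero_right (v : ι → F) : maxInner v 0 = 0 := by
  simp [maxInner]

theorem neg_norm_mul_norm_le_maxInner (v : ι → F) (i : ι) (d : F) :
    -(‖v i‖ * ‖d‖) ≤ maxInner v d :=
  (neg_le_of_abs_le (abs_real_inner_le_norm (v i) d)).trans (inner_le_maxInner v i d)

theorem maxInner_le_add_norm_sub_mul (v w : ι → F) (d : F) :
    maxInner v d ≤ maxInner w d + ‖v - w‖ * ‖d‖ := by
  refine sup'_le _ _ fun i _ => ?_
  have hdiff : ⟪v i - w i, d⟫ ≤ ‖v - w‖ * ‖d‖ :=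
    (real_inner_le_norm _ _).trans
      (mul_le_mul_of_nonneg_right (norm_le_pi_norm (v - w) i) (norm_nonneg d))
  have hsplit : ⟪v i, d⟫ = ⟪w i, d⟫ + ⟪v i - w i, d⟫ := by
    rw [inner_sub_left]; ring
  linarith [inner_le_maxInner w i d]

theorem convexOn_maxInner (v : ι → F) : ConvexOn ℝ Set.univ (maxInner v) := by
  refine ⟨convex_univ, fun x _ y _ a b ha hb _ => sup'_le _ _ fun i _ => ?_⟩
  simp only [smul_eq_mul, inner_add_right, real_inner_smul_right]
  gcongr <;> exact inner_le_maxInner v i _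

theorem Continuous.maxInner {X : Type*} [TopologicalSpace X] {v : X → ι → F} {d : X → F}
    (hv : Continuous v) (hd : Continuous d) : Continuous fun x => _root_.maxInner (v x) (d x) :=
  Continuous.finset_sup'_apply univ_nonempty fun i _ => ((continuous_apply i).comp hv).inner hd

theorem Continuous.descentModel {X : Type*} [TopologicalSpace X] {v : X → ι → F} {d : X → F}
    (hv : Continuous v) (hd : Continuous d) :
    Continuous fun x => _root_.descentModel (v x) (d x) :=
  (hv.maxInner hd).add ((hd.norm.pow 2).div_const 2)

end MaxInner

section StrongConvexity

variable {F : Type*} [NormedAddCommGroup F] [InnerProductSpace ℝ F]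

theorem sq_norm_sub_div_four_le_of_forall_le {p : F → ℝ} (hp : ConvexOn ℝ Set.univ p) {a : F}
    (ha : ∀ d, p a + ‖a‖ ^ 2 / 2 ≤ p d + ‖d‖ ^ 2 / 2) (d : F) :
    ‖d - a‖ ^ 2 / 4 ≤ (p d + ‖d‖ ^ 2 / 2) - (p a + ‖a‖ ^ 2 / 2) := by
  have hmid : p ((1 / 2 : ℝ) • a + (1 / 2 : ℝ) • d) ≤ (1 / 2 : ℝ) • p a + (1 / 2 : ℝ) • p d :=
    hp.2 trivial trivial (by norm_num) (by norm_num) (by norm_num)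
  have hnorm : ‖(1 / 2 : ℝ) • a + (1 / 2 : ℝ) • d‖ = ‖a + d‖ / 2 := by
    rw [← smul_add, norm_smul]; norm_num; ring
  have hpar := parallelogram_law_with_norm ℝ a d
  have hamid := ha ((1 / 2 : ℝ) • a + (1 / 2 : ℝ) • d)
  rw [hnorm] at hamid
  rw [norm_sub_rev]
  simp only [smul_eq_mul] at hmid
  nlinarith

end StrongConvexity

section Minimiser

variable {ι F : Type*} [Fintype ι] [Nonempty ι] [NormedAddCommGroup F] [InnerProductSpace ℝ F]

theorem norm_le_two_mul_norm_of_forall_descentModel_le {v : ι → F} {a : F}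
    (ha : ∀ d, descentModel v a ≤ descentModel v d) : ‖a‖ ≤ 2 * ‖v‖ := by
  obtain ⟨i⟩ := ‹Nonempty ι›
  have hzero := ha 0
  simp only [descentModel, maxInner_zero_right, norm_zero] at hzero
  have hlow := neg_norm_mul_norm_le_maxInner v i a
  have hsq : ‖a‖ * ‖a‖ ≤ 2 * ‖v‖ * ‖a‖ := by
    nlinarith [mul_le_mul_of_nonneg_right (norm_le_pi_norm v i) (norm_nonneg a)]
  rcases (norm_nonneg a).eq_or_lt with ha0 | ha0
  · rw [← ha0]; positivity
  · exact le_of_mul_le_mul_right hsq ha0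

theorem sq_norm_sub_le_of_forall_descentModel_le {v w : ι → F} {a b : F}
    (ha : ∀ d, descentModel v a ≤ descentModel v d)
    (hb : ∀ d, descentModel w b ≤ descentModel w d) :
    ‖a - b‖ ^ 2 ≤ 2 * ‖v - w‖ * (‖a‖ + ‖b‖) := by
  have hga := sq_norm_sub_div_four_le_of_forall_le (convexOn_maxInner v) ha b
  have hgb := sq_norm_sub_div_four_le_of_forall_le (convexOn_maxInner w) hb a
  have hpa := maxInner_le_add_norm_sub_mul v w b
  have hpb := maxInner_le_add_norm_sub_mul w v a
  rw [norm_sub_rev w v] at hpb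
  rw [norm_sub_rev b a] at hga
  linarith

theorem continuous_of_forall_descentModel_le {X : Type*} [TopologicalSpace X] {v : X → ι → F}
    (hv : Continuous v) {d : X → F} (hd : ∀ x e, descentModel (v x) (d x) ≤ descentModel (v x) e) :
    Continuous d := by
  refine continuous_iff_continuousAt.2 fun x => tendsto_iff_norm_sub_tendsto_zero.2 ?_
  let bound : X → ℝ := fun y => √(4 * ‖v y - v x‖ * (‖v y‖ + ‖v x‖))
  have hbound : ∀ y, ‖d y - d x‖ ≤ bound y := by
    intro y
    refine Real.le_sqrt_of_sq_le ((sq_norm_sub_le_of_forall_descentModel_le (hd y) (hd x)).trans ?_)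
    have hy := norm_le_two_mul_norm_of_forall_descentModel_le (hd y)
    have hx := norm_le_two_mul_norm_of_forall_descentModel_le (hd x)
    have hδ := norm_nonneg (v y - v x)
    nlinarith
  have hcont : Continuous bound := by fun_prop
  have hlim := hcont.tendsto x
  simp only [bound, sub_self, norm_zero, mul_zero, zero_mul, Real.sqrt_zero] at hlim
  exact squeeze_zero (fun _ => norm_nonneg _) hbound hlim

end Minimiser

theorem ContDiff.continuous_gradient {F : Type*} [NormedAddCommGroup F] [InnerProductSpace ℝ F]
    [CompleteSpace F] {f : F → ℝ} (hf : ContDiff ℝ 1 f) : Continuous (gradient f) :=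
  (InnerProductSpace.toDual ℝ F).symm.continuous.comp (hf.continuous_fderiv one_ne_zero)

/-- continuity of x ↦ d_SD(x) and x ↦ θ_SD(x). -/
theorem stmt2 {n m : ℕ} [NeZero m] (f : Fin m → E n → ℝ)
    (hf : ∀ i, ContDiff ℝ 1 (f i)) (dSD : E n → E n) (θSD : E n → ℝ)
    (hmin : ∀ x d : E n, maxD f x (dSD x) + ‖dSD x‖ ^ 2 / 2 ≤ maxD f x d + ‖d‖ ^ 2 / 2)
    (hθ : ∀ x, θSD x = maxD f x (dSD x) + ‖dSD x‖ ^ 2 / 2) :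
    Continuous dSD ∧ Continuous θSD := by
  have hgrad : Continuous fun x i => gradient (f i) x :=
    continuous_pi fun i => (hf i).continuous_gradient
  have hmodel : ∀ x e, descentModel (fun i => gradient (f i) x) (dSD x) ≤
      descentModel (fun i => gradient (f i) x) e := hmin
  have hd : Continuous dSD := continuous_of_forall_descentModel_le hgrad hmodel
  exact ⟨hd, funext hθ ▸ hgrad.descentModel hd⟩
end
end

section
/- Suppose each f_i is continuously differentiable and for every z ∈ ℝⁿ the level set {x ∈ ℝⁿ : f_i(x) ≤ f_i(z) for all i} is bounded. Let x ∈ ℝⁿ, let d be a descent direction for f at x, and let 0 < σ₁ < σ₂ < 1. Then there exist 0 < α₁ < α₂ such that every α ∈ [α₁, α₂] satisfies the Wolfe conditions at (x, d). -/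
open RealInnerProductSpace

noncomputable section

/-!
With `D = D(x, d) < 0`, the Armijo gaps `gᵢ(t) = fᵢ(x + t d) - fᵢ(x) - σ₁ t D` vanish at `0`
with negative slope, so they are all negative on some `(0, ε)`, while bounded level sets force
one of them to be nonnegative far out along the ray. Let `a` be the first point where some
`g_{i₀}` becomes nonnegative. On `(0, a)` the Armijo condition holds, and the mean value theorem
gives `ξ ∈ (0, a)` with `⟪∇f_{i₀}(x + ξ d), d⟫ ≥ σ₁ D > σ₂ D`, so `D(x + ξ d, d) > σ₂ D`.
By continuity this persists on a small interval around `ξ` inside `(0, a)`.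
-/

open Set Filter Topology

theorem exists_lt_Icc_subset_of_mem_nhds {α : Type*} [LinearOrder α] [TopologicalSpace α]
    [OrderTopology α] [DenselyOrdered α] [NoMaxOrder α] [NoMinOrder α] {s : Set α} {ξ : α}
    (hs : s ∈ 𝓝 ξ) : ∃ a b, a < b ∧ Icc a b ⊆ s := by
  obtain ⟨l, u, ⟨hl, hu⟩, hsub⟩ := mem_nhds_iff_exists_Ioo_subset.1 hs
  obtain ⟨a, hla, haξ⟩ := exists_between hl
  obtain ⟨b, hξb, hbu⟩ := exists_between hu
  exact ⟨a, b, haξ.trans hξb, (Icc_subset_Ioo hla hbu).trans hsub⟩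

theorem Bornology.IsBounded.exists_add_smul_notMem {V : Type*} [NormedAddCommGroup V]
    [NormedSpace ℝ V] {S : Set V} (hS : Bornology.IsBounded S) (x : V) {d : V} (hd : d ≠ 0) :
    ∃ β : ℝ, 0 < β ∧ x + β • d ∉ S := by
  obtain ⟨r, hr⟩ := hS.subset_closedBall x
  have hd' : 0 < ‖d‖ := norm_pos_iff.2 hd
  refine ⟨(|r| + 1) / ‖d‖, by positivity, fun hmem => ?_⟩
  have hdist := hr hmem
  rw [Metric.mem_closedBall, dist_eq_norm, add_sub_cancel_left, norm_smul, Real.norm_of_nonneg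
    (by positivity), div_mul_cancel₀ _ hd'.ne'] at hdist
  linarith [le_abs_self r]

theorem eventually_lt_of_hasDerivAt_neg {g : ℝ → ℝ} {g' a : ℝ} (hg : HasDerivAt g g' a)
    (hg' : g' < 0) : ∀ᶠ t in 𝓝[>] a, g t < g a := by
  filter_upwards [hg.hasDerivWithinAt.limsup_slope_le' (lt_irrefl a) hg', self_mem_nhdsWithin]
    with t hslope hat
  rwa [slope_def_field, div_lt_iff₀ (sub_pos.2 hat), zero_mul, sub_neg] at hslope

theorem exists_first_nonneg {ι : Type*} [Finite ι] {g : ι → ℝ → ℝ} (hg : ∀ i, Continuous (g i))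
    (hneg : ∀ᶠ t in 𝓝[>] 0, ∀ i, g i t < 0) {β : ℝ} (hβ : 0 < β) (hβi : ∃ i, 0 ≤ g i β) :
    ∃ a > 0, (∃ i, 0 ≤ g i a) ∧ ∀ t ∈ Ioo 0 a, ∀ i, g i t < 0 := by
  obtain ⟨ε, hε, hεneg⟩ := mem_nhdsGT_iff_exists_Ioo_subset.1 hneg
  set c := min β (ε / 2)
  set S := Ici c ∩ ⋃ i, {t | 0 ≤ g i t}
  have hSclosed : IsClosed S :=
    isClosed_Ici.inter (isClosed_iUnion_of_finite fun i => isClosed_le continuous_const (hg i))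
  have hSbdd : BddBelow S := ⟨c, fun t ht => ht.1⟩
  have hβS : β ∈ S := ⟨mem_Ici.2 (min_le_left _ _), mem_iUnion.2 hβi⟩
  have haS : sInf S ∈ S := hSclosed.csInf_mem ⟨β, hβS⟩ hSbdd
  have hc : 0 < c := lt_min hβ (half_pos hε)
  refine ⟨sInf S, hc.trans_le haS.1, mem_iUnion.1 haS.2, fun t ht i => ?_⟩
  by_cases htc : t < c
  · exact hεneg ⟨ht.1, htc.trans_le (min_le_right _ _) |>.trans (half_lt_self hε)⟩ i
  · by_contra! hti
    exact (csInf_le hSbdd ⟨not_lt.1 htc, mem_iUnion.2 ⟨i, hti⟩⟩).not_gt ht.2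

section Line

variable {F : Type*} [NormedAddCommGroup F] [InnerProductSpace ℝ F] [CompleteSpace F]
  {f : F → ℝ} (x d : F)

theorem hasDerivAt_add_smul {t : ℝ} (hf : DifferentiableAt ℝ f (x + t • d)) :
    HasDerivAt (fun s : ℝ => f (x + s • d)) ⟪gradient f (x + t • d), d⟫ t := by
  have hline : HasDerivAt (fun s : ℝ => x + s • d) d t := by
    simpa using ((hasDerivAt_id t).smul_const d).const_add x
  rw [inner_gradient_left]
  exact hf.hasFDerivAt.comp_hasDerivAt t hline

theorem continuous_inner_gradient_add_smul (hf : ContDiff ℝ 1 f) :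
    Continuous fun t : ℝ => ⟪gradient f (x + t • d), d⟫ := by
  simp_rw [inner_gradient_left]
  exact ((hf.continuous_fderiv one_ne_zero).comp (by fun_prop)).clm_apply continuous_const

end Line

section Wolfe

variable {n m : ℕ} [NeZero m] (f : Fin m → E n → ℝ) (x d : E n)

theorem maxD_lt_iff {r : ℝ} : maxD f x d < r ↔ ∀ i, ⟪gradient (f i) x, d⟫ < r := by
  simp [maxD, Finset.sup'_lt_iff]

theorem inner_gradient_le_maxD (i : Fin m) : ⟪gradient (f i) x, d⟫ ≤ maxD f x d :=
  Finset.le_sup' (fun j => ⟪gradient (f j) x, d⟫) (Finset.mem_univ i)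

theorem continuous_maxD_add_smul (hf : ∀ i, ContDiff ℝ 1 (f i)) :
    Continuous fun t : ℝ => maxD f (x + t • d) d :=
  Continuous.finset_sup'_apply Finset.univ_nonempty fun i _ =>
    continuous_inner_gradient_add_smul x d (hf i)

def armijoGap (σ : ℝ) (i : Fin m) (t : ℝ) : ℝ :=
  f i (x + t • d) - f i x - σ * t * maxD f x d

variable {f} (σ : ℝ)

theorem armijoGap_zero (i : Fin m) : armijoGap f x d σ i 0 = 0 := by
  simp [armijoGap]

theorem hasDerivAt_armijoGap (hf : ∀ i, Differentiable ℝ (f i)) (i : Fin m) (t : ℝ) :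
    HasDerivAt (armijoGap f x d σ i)
      (⟪gradient (f i) (x + t • d), d⟫ - σ * maxD f x d) t := by
  have hlin : HasDerivAt (fun s : ℝ => σ * s * maxD f x d) (σ * 1 * maxD f x d) t :=
    ((hasDerivAt_id t).const_mul σ).mul_const _
  have hgap := ((hasDerivAt_add_smul x d (hf i _)).sub_const (f i x)).sub hlin
  rwa [mul_one] at hgap

theorem continuous_armijoGap (hf : ∀ i, Differentiable ℝ (f i)) (i : Fin m) :
    Continuous (armijoGap f x d σ i) :=
  continuous_iff_continuousAt.2 fun t => (hasDerivAt_armijoGap x d σ hf i t).continuousAt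

theorem eventually_armijoGap_neg (hf : ∀ i, Differentiable ℝ (f i))
    (hdesc : ∀ i, ⟪gradient (f i) x, d⟫ < 0) (hσ : σ < 1) :
    ∀ᶠ t in 𝓝[>] 0, ∀ i, armijoGap f x d σ i t < 0 := by
  have hD : maxD f x d < 0 := (maxD_lt_iff f x d).2 hdesc
  refine eventually_all.2 fun i => ?_
  have hslope : ⟪gradient (f i) x, d⟫ - σ * maxD f x d < 0 := by
    nlinarith [inner_gradient_le_maxD f x d i]
  have hderiv := hasDerivAt_armijoGap x d σ hf i 0
  rw [zero_smul, add_zero] at hderiv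
  simpa only [armijoGap_zero] using eventually_lt_of_hasDerivAt_neg hderiv hslope

theorem exists_armijoGap_nonneg (hlevel : Bornology.IsBounded {w : E n | ∀ i, f i w ≤ f i x})
    (hdesc : ∀ i, ⟪gradient (f i) x, d⟫ < 0) (hσ : 0 ≤ σ) :
    ∃ β > 0, ∃ i, 0 ≤ armijoGap f x d σ i β := by
  have hd : d ≠ 0 := by
    rintro rfl
    simpa using hdesc 0
  obtain ⟨β, hβ, hnotMem⟩ := hlevel.exists_add_smul_notMem x hd
  simp only [mem_ofPred_eq, not_forall, not_le] at hnotMem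
  obtain ⟨i, hi⟩ := hnotMem
  have hdecrease : σ * β * maxD f x d ≤ 0 :=
    mul_nonpos_of_nonneg_of_nonpos (mul_nonneg hσ hβ.le) ((maxD_lt_iff f x d).2 hdesc).le
  exact ⟨β, hβ, i, by unfold armijoGap; linarith⟩

theorem exists_mem_Ioo_le_maxD_of_armijoGap_nonneg (hf : ∀ i, Differentiable ℝ (f i))
    {a : ℝ} (ha : 0 < a) {i : Fin m} (hai : 0 ≤ armijoGap f x d σ i a) :
    ∃ ξ ∈ Ioo 0 a, σ * maxD f x d ≤ maxD f (x + ξ • d) d := by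
  obtain ⟨ξ, hξ, hslope⟩ := exists_hasDerivAt_eq_slope (armijoGap f x d σ i) _ ha
    (continuous_armijoGap x d σ hf i).continuousOn fun t _ => hasDerivAt_armijoGap x d σ hf i t
  rw [armijoGap_zero, sub_zero, sub_zero] at hslope
  have hnonneg : 0 ≤ ⟪gradient (f i) (x + ξ • d), d⟫ - σ * maxD f x d :=
    hslope ▸ div_nonneg hai ha.le
  exact ⟨ξ, hξ, by linarith [inner_gradient_le_maxD f (x + ξ • d) d i]⟩

end Wolfe

/-- existence of an interval of step sizes satisfying the Wolfe conditions. -/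
theorem stmt10 {n m : ℕ} [NeZero m] (f : Fin m → E n → ℝ)
    (hf : ∀ i, ContDiff ℝ 1 (f i))
    (hlevel : ∀ z : E n, Bornology.IsBounded {w : E n | ∀ i, f i w ≤ f i z})
    (x d : E n) (hdesc : ∀ i, ⟪gradient (f i) x, d⟫ < 0)
    (σ₁ σ₂ : ℝ) (hσ1 : 0 < σ₁) (hσ12 : σ₁ < σ₂) (hσ2 : σ₂ < 1) :
    ∃ α₁ α₂ : ℝ, 0 < α₁ ∧ α₁ < α₂ ∧ ∀ α ∈ Set.Icc α₁ α₂,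
      (∀ i, f i (x + α • d) ≤ f i x + σ₁ * α * maxD f x d) ∧
      σ₂ * maxD f x d ≤ maxD f (x + α • d) d := by
  have hdiff : ∀ i, Differentiable ℝ (f i) := fun i => (hf i).differentiable one_ne_zero
  have hD : maxD f x d < 0 := (maxD_lt_iff f x d).2 hdesc
  obtain ⟨β, hβ, hβi⟩ := exists_armijoGap_nonneg x d σ₁ (hlevel x) hdesc hσ1.le
  obtain ⟨a, ha, ⟨i, hai⟩, harmijo⟩ := exists_first_nonneg (continuous_armijoGap x d σ₁ hdiff)
    (eventually_armijoGap_neg x d σ₁ hdiff hdesc (hσ12.trans hσ2)) hβ hβi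
  obtain ⟨ξ, hξ, hξD⟩ := exists_mem_Ioo_le_maxD_of_armijoGap_nonneg x d σ₁ hdiff ha hai
  have hcurv : σ₂ * maxD f x d < maxD f (x + ξ • d) d := by nlinarith
  have hU : Ioo 0 a ∩ {t | σ₂ * maxD f x d < maxD f (x + t • d) d} ∈ 𝓝 ξ :=
    inter_mem (isOpen_Ioo.mem_nhds hξ)
      ((isOpen_lt continuous_const (continuous_maxD_add_smul f x d hf)).mem_nhds hcurv)
  obtain ⟨α₁, α₂, hα, hsub⟩ := exists_lt_Icc_subset_of_mem_nhds hU
  refine ⟨α₁, α₂, (hsub (left_mem_Icc.2 hα.le)).1.1, hα, fun α hα' => ?_⟩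
  obtain ⟨hαa, hαcurv⟩ := hsub hα'
  refine ⟨fun j => ?_, hαcurv.le⟩
  have := harmijo α hαa j
  unfold armijoGap at this
  linarith
end
end

section
/- Suppose each ∇f_i is Lipschitz continuous with constant L_i, and fix x₀ ∈ ℝⁿ and f_low ∈ ℝ. Let B ∈ ℝ^{n×n} be symmetric positive definite, let x ∈ ℝⁿ and d ≠ 0 satisfy D(x,d) ≤ −dᵀBd, let σ₁ ∈ (0,1) and α ≥ α₀ > 0, set x' := x + α d and s := x' − x, and assume the sufficient decrease condition f_i(x') ≤ f_i(x) + σ₁ α D(x,d) holds for all i, together with f_i(x) ≤ f_i(x₀) and f_i(x') ≥ f_low for all i. Let λ ∈ Δ_m, y := Σ_{i=1}^m λ_i (∇f_i(x') − ∇f_i(x)), m̂ := max(−yᵀs/‖s‖², 0) + Σ_{i=1}^m λ_i (f_i(x) − f_i(x')), and γ := y + m̂ s. Then γᵀs/‖s‖² ≥ σ₁ α₀ (dᵀBd) and ‖γ‖²/(γᵀs) ≤ (2 max_{1≤i≤m} L_i + max_{1≤i≤m}(f_i(x₀) − f_low))² / (σ₁ α₀ (dᵀBd)). -/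
open RealInnerProductSpace

noncomputable section

def quad {n : ℕ} (B : Matrix (Fin n) (Fin n) ℝ) (d : E n) : ℝ :=
  ∑ i, ∑ j, d i * B i j * d j

/-!
With `t := yᵀs/‖s‖²`, the correction term `max (-t) 0` makes `γᵀs/‖s‖² = (t + max (-t) 0) + M`
at least the averaged decrease `M = Σ λᵢ (fᵢ(x) - fᵢ(x'))`, which sufficient decrease bounds below
by `σ₁ α₀ dᵀBd`. On the other side, `‖y‖ ≤ (max Lᵢ) ‖s‖` by the Lipschitz bounds, so
`max (-t) 0 ≤ max Lᵢ`, and `M ≤ max (fᵢ(x₀) - f_low)`; hence `‖γ‖ ≤ C ‖s‖` with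
`C = 2 max Lᵢ + max (fᵢ(x₀) - f_low)`, and `‖γ‖²/γᵀs ≤ C² ‖s‖² / (σ₁ α₀ dᵀBd ‖s‖²)`.
-/

theorem quad_pos_of_posDef {n : ℕ} {B : Matrix (Fin n) (Fin n) ℝ} (hB : B.PosDef) {d : E n}
    (hd : d ≠ 0) : 0 < quad B d := by
  have h := hB.dotProduct_mulVec_pos (x := WithLp.ofLp d) (fun h => hd (by simpa using h))
  refine h.trans_eq ?_
  simp only [quad, dotProduct, Matrix.mulVec, star_trivial, Finset.mul_sum]
  exact Finset.sum_congr rfl fun i _ => Finset.sum_congr rfl fun j _ => by ring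

theorem sum_smul_mem_of_mem_stdSimplex {ι F : Type*} [Fintype ι] [AddCommGroup F] [Module ℝ F]
    {S : Set F} (hS : Convex ℝ S) {w : ι → ℝ} (hw : w ∈ stdSimplex ℝ ι) {z : ι → F}
    (hz : ∀ i, z i ∈ S) : ∑ i, w i • z i ∈ S :=
  hS.sum_mem (fun i _ => hw.1 i) hw.2 (fun i _ => hz i)

section CorrectedSecant

variable {F : Type*} [NormedAddCommGroup F] [InnerProductSpace ℝ F]

def correctedSecant (y s : F) (M : ℝ) : F :=
  y + (max (-(⟪y, s⟫ / ‖s‖ ^ 2)) 0 + M) • s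

theorem inner_correctedSecant_div_eq {y s : F} (hs : s ≠ 0) (M : ℝ) :
    ⟪correctedSecant y s M, s⟫ / ‖s‖ ^ 2 =
      ⟪y, s⟫ / ‖s‖ ^ 2 + max (-(⟪y, s⟫ / ‖s‖ ^ 2)) 0 + M := by
  have hs2 : ‖s‖ ^ 2 ≠ 0 := by positivity
  rw [correctedSecant, inner_add_left, real_inner_smul_left, real_inner_self_eq_norm_sq]
  field_simp
  ring

theorem le_inner_correctedSecant_div {y s : F} (hs : s ≠ 0) (M : ℝ) :
    M ≤ ⟪correctedSecant y s M, s⟫ / ‖s‖ ^ 2 := by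
  rw [inner_correctedSecant_div_eq hs]
  linarith [le_max_left (-(⟪y, s⟫ / ‖s‖ ^ 2)) 0]

theorem norm_correctedSecant_le {y s : F} (hs : s ≠ 0) {K M : ℝ} (hy : ‖y‖ ≤ K * ‖s‖)
    (hM : 0 ≤ M) : ‖correctedSecant y s M‖ ≤ (2 * K + M) * ‖s‖ := by
  have hns : 0 < ‖s‖ := norm_pos_iff.mpr hs
  have hK : 0 ≤ K := nonneg_of_mul_nonneg_left ((norm_nonneg y).trans hy) hns
  have hcorr : max (-(⟪y, s⟫ / ‖s‖ ^ 2)) 0 ≤ K := by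
    refine max_le ?_ hK
    rw [← neg_div, div_le_iff₀ (by positivity)]
    nlinarith [neg_abs_le ⟪y, s⟫, abs_real_inner_le_norm y s]
  calc ‖correctedSecant y s M‖
      ≤ ‖y‖ + (max (-(⟪y, s⟫ / ‖s‖ ^ 2)) 0 + M) * ‖s‖ := by
        refine (norm_add_le _ _).trans_eq ?_
        rw [norm_smul, Real.norm_of_nonneg (by positivity)]
    _ ≤ K * ‖s‖ + (K + M) * ‖s‖ := by gcongr
    _ = (2 * K + M) * ‖s‖ := by ring

end CorrectedSecant

theorem sq_norm_div_inner_le {F : Type*} [NormedAddCommGroup F] [InnerProductSpace ℝ F]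
    {γ s : F} (hs : s ≠ 0) {c C : ℝ} (hc : 0 < c) (hcurv : c ≤ ⟪γ, s⟫ / ‖s‖ ^ 2)
    (hγ : ‖γ‖ ≤ C * ‖s‖) : ‖γ‖ ^ 2 / ⟪γ, s⟫ ≤ C ^ 2 / c := by
  have hs2 : 0 < ‖s‖ ^ 2 := by positivity
  have hcs : c * ‖s‖ ^ 2 ≤ ⟪γ, s⟫ := (le_div_iff₀ hs2).mp hcurv
  calc ‖γ‖ ^ 2 / ⟪γ, s⟫ ≤ (C * ‖s‖) ^ 2 / (c * ‖s‖ ^ 2) := by gcongr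
    _ = C ^ 2 / c := by rw [mul_pow, mul_div_mul_right _ _ hs2.ne']

theorem stmt12_general {n m : ℕ} [NeZero m] (f : Fin m → E n → ℝ)
    (L : Fin m → NNReal) (hL : ∀ i, LipschitzWith (L i) (fun z => gradient (f i) z))
    (x₀ : E n) (flow : ℝ)
    (B : Matrix (Fin n) (Fin n) ℝ) (hB : B.PosDef)
    (x d : E n) (hd0 : d ≠ 0) (hD : maxD f x d ≤ -(quad B d))
    (σ₁ : ℝ) (hσ₁ : σ₁ ∈ Set.Ioo (0 : ℝ) 1)
    (α α₀ : ℝ) (hα₀ : 0 < α₀) (hα : α₀ ≤ α)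
    (x' : E n) (hx' : x' = x + α • d) (s : E n) (hss : s = x' - x)
    (hdec : ∀ i, f i x' ≤ f i x + σ₁ * α * maxD f x d)
    (hbound : ∀ i, f i x ≤ f i x₀) (hlow : ∀ i, flow ≤ f i x')
    (lam : Fin m → ℝ) (hlam : lam ∈ stdSimplex ℝ (Fin m))
    (y : E n) (hy : y = ∑ i, lam i • (gradient (f i) x' - gradient (f i) x))
    (mh : ℝ) (hmh : mh = max (-(⟪y, s⟫ / ‖s‖ ^ 2)) 0 + ∑ i, lam i * (f i x - f i x'))
    (γ : E n) (hγ : γ = y + mh • s) :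
    σ₁ * α₀ * quad B d ≤ ⟪γ, s⟫ / ‖s‖ ^ 2 ∧
    ‖γ‖ ^ 2 / ⟪γ, s⟫ ≤
      (2 * (Finset.univ.sup' Finset.univ_nonempty fun i => (L i : ℝ)) +
        Finset.univ.sup' Finset.univ_nonempty fun i => f i x₀ - flow) ^ 2 /
      (σ₁ * α₀ * quad B d) := by
  set Lmax := Finset.univ.sup' Finset.univ_nonempty fun i => (L i : ℝ)
  set Fmax := Finset.univ.sup' Finset.univ_nonempty fun i => f i x₀ - flow
  set M := ∑ i, lam i * (f i x - f i x')
  have hγ' : γ = correctedSecant y s M := by rw [hγ, hmh, correctedSecant]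
  have hs : s = α • d := by rw [hss, hx']; abel
  have hs0 : s ≠ 0 := hs ▸ smul_ne_zero (hα₀.trans_le hα).ne' hd0
  have hc : 0 < σ₁ * α₀ * quad B d := mul_pos (mul_pos hσ₁.1 hα₀) (quad_pos_of_posDef hB hd0)
  have hcM : σ₁ * α₀ * quad B d ≤ M := by
    refine sum_smul_mem_of_mem_stdSimplex (convex_Ici _) hlam
      (z := fun i => f i x - f i x') fun i => ?_
    have hstep := mul_le_mul_of_nonneg_left hD (mul_pos hσ₁.1 (hα₀.trans_le hα)).le
    show σ₁ * α₀ * quad B d ≤ f i x - f i x'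
    nlinarith [hdec i, hσ₁.1]
  have hMF : M ≤ Fmax := by
    refine sum_smul_mem_of_mem_stdSimplex (convex_Iic _) hlam
      (z := fun i => f i x - f i x') fun i => ?_
    show f i x - f i x' ≤ Fmax
    linarith [hbound i, hlow i, Finset.le_sup' (fun i => f i x₀ - flow) (Finset.mem_univ i)]
  have hyL : ‖y‖ ≤ Lmax * ‖s‖ := by
    rw [hy, ← mem_closedBall_zero_iff]
    refine sum_smul_mem_of_mem_stdSimplex (convex_closedBall _ _) hlam fun i => ?_
    rw [mem_closedBall_zero_iff, ← dist_eq_norm, hss, ← dist_eq_norm]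
    exact ((hL i).dist_le_mul x' x).trans <|
      mul_le_mul_of_nonneg_right (Finset.le_sup' (fun i => (L i : ℝ)) (Finset.mem_univ i)) dist_nonneg
  have hcurv : σ₁ * α₀ * quad B d ≤ ⟪γ, s⟫ / ‖s‖ ^ 2 :=
    hγ' ▸ hcM.trans (le_inner_correctedSecant_div hs0 M)
  refine ⟨hcurv, sq_norm_div_inner_le hs0 hc hcurv ?_⟩
  calc ‖γ‖ ≤ (2 * Lmax + M) * ‖s‖ := hγ' ▸ norm_correctedSecant_le hs0 hyL (hc.le.trans hcM)
    _ ≤ (2 * Lmax + Fmax) * ‖s‖ := by gcongr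

/-- curvature-type bounds for γ produced by the modified update. -/
theorem stmt12 {n m : ℕ} [NeZero m] (f : Fin m → E n → ℝ)
    (hf : ∀ i, ContDiff ℝ 1 (f i))
    (L : Fin m → NNReal) (hL : ∀ i, LipschitzWith (L i) (fun z => gradient (f i) z))
    (x₀ : E n) (flow : ℝ)
    (B : Matrix (Fin n) (Fin n) ℝ) (hB : B.PosDef)
    (x d : E n) (hd0 : d ≠ 0) (hD : maxD f x d ≤ -(quad B d))
    (σ₁ : ℝ) (hσ₁ : σ₁ ∈ Set.Ioo (0 : ℝ) 1)
    (α α₀ : ℝ) (hα₀ : 0 < α₀) (hα : α₀ ≤ α)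
    (x' : E n) (hx' : x' = x + α • d) (s : E n) (hss : s = x' - x)
    (hdec : ∀ i, f i x' ≤ f i x + σ₁ * α * maxD f x d)
    (hbound : ∀ i, f i x ≤ f i x₀) (hlow : ∀ i, flow ≤ f i x')
    (lam : Fin m → ℝ) (hlam : lam ∈ stdSimplex ℝ (Fin m))
    (y : E n) (hy : y = ∑ i, lam i • (gradient (f i) x' - gradient (f i) x))
    (mh : ℝ) (hmh : mh = max (-(⟪y, s⟫ / ‖s‖ ^ 2)) 0 + ∑ i, lam i * (f i x - f i x'))
    (γ : E n) (hγ : γ = y + mh • s) :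
    σ₁ * α₀ * quad B d ≤ ⟪γ, s⟫ / ‖s‖ ^ 2 ∧
    ‖γ‖ ^ 2 / ⟪γ, s⟫ ≤
      (2 * (Finset.univ.sup' Finset.univ_nonempty fun i => (L i : ℝ)) +
        Finset.univ.sup' Finset.univ_nonempty fun i => f i x₀ - flow) ^ 2 /
      (σ₁ * α₀ * quad B d) :=
  stmt12_general f L hL x₀ flow B hB x d hd0 hD σ₁ hσ₁ α α₀ hα₀ hα x' hx' s hss hdec hbound hlow lam
    hlam y hy mh hmh γ hγ
end
end
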